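/- arXiv:1503.08473 — 3 statements merged into one kernel-verified Lean document; each statement's English description precedes it below -/
import Mathlib

section
/- The vector 1 ⊗ v for any v ∈ R^d, and the configuration vector p itself, both lie in the null space of the bearing rigidity matrix R_B(p) = diag(P_{g_k}/‖e_k‖) H̄. Consequently rank(R_B) ≤ dn − d − 1. -/
open Matrix
open scoped Kronecker

noncomputable def projMat {d : ℕ} (g : Fin d → ℝ) : Matrix (Fin d) (Fin d) ℝ :=
  1 - Matrix.vecMulVec g g

private lemma sumH' {n : ℕ} (a b : Fin n) (hab : a ≠ b) (f : Fin n → ℝ) :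
    ∑ j, (if j = a then (1:ℝ) else if j = b then -1 else 0) * f j = f a - f b := by
  have : ∀ j, (if j = a then (1:ℝ) else if j = b then -1 else 0) * f j
      = (if j = a then f j else 0) - (if j = b then f j else 0) := by
    intro j
    by_cases h1 : j = a
    · subst h1; simp [hab]
    · by_cases h2 : j = b
      · subst h2; simp [Ne.symm hab]
      · simp [h1, h2]
  simp only [this, Finset.sum_sub_distrib]
  rw [Finset.sum_ite_eq' Finset.univ a f, Finset.sum_ite_eq' Finset.univ b f]
  simp

private lemma kronVec {n d m : ℕ} (H : Matrix (Fin m) (Fin n) ℝ) (x : Fin n × Fin d → ℝ)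
    (k : Fin m) (a : Fin d) :
    ((H ⊗ₖ (1 : Matrix (Fin d) (Fin d) ℝ)) *ᵥ x) (k, a) = ∑ j, H k j * x (j, a) := by
  rw [Matrix.mulVec]
  simp only [dotProduct, Fintype.sum_prod_type, Matrix.kroneckerMap_apply,
    Matrix.one_apply]
  refine Finset.sum_congr rfl fun j _ => ?_
  rw [Finset.sum_eq_single a] <;> simp_all [eq_comm]

/-- For a framework `G(p)` with incidence matrix `H` (edge `k` directed from
`tail k` to `head k`), edge vectors `e_k = p_{head k} - p_{tail k}`, bearings
`g_k = e_k / ‖e_k‖` and bearing rigidity matrix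
`R_B = diag(P_{g_k} / ‖e_k‖) H̄`: every vector `1 ⊗ v` and the configuration
`p` itself lie in the null space of `R_B`, and `rank R_B ≤ dn - d - 1`. -/
theorem stmt9 {d n m : ℕ} (hd : 2 ≤ d) (hn : 2 ≤ n)
    (head tail : Fin m → Fin n) (hht : ∀ k, head k ≠ tail k)
    (p : Fin n → Fin d → ℝ) (hp : ∀ k, p (head k) ≠ p (tail k))
    (H : Matrix (Fin m) (Fin n) ℝ)
    (hH : ∀ k i, H k i = if i = head k then 1 else if i = tail k then -1 else 0)
    (e : Fin m → Fin d → ℝ) (he : ∀ k, e k = p (head k) - p (tail k))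
    (g : Fin m → Fin d → ℝ) (hg : ∀ k, g k = (Real.sqrt (∑ i, e k i ^ 2))⁻¹ • e k)
    (RB : Matrix (Fin m × Fin d) (Fin n × Fin d) ℝ)
    (hRB : RB = (show Matrix (Fin m × Fin d) (Fin m × Fin d) ℝ from
        fun q r => if q.1 = r.1 then
        ((Real.sqrt (∑ i, e q.1 i ^ 2))⁻¹ • projMat (g q.1)) q.2 r.2 else 0) *
        (H ⊗ₖ (1 : Matrix (Fin d) (Fin d) ℝ))) :
    (∀ v : Fin d → ℝ, RB *ᵥ (fun q => v q.2) = 0) ∧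
    RB *ᵥ (fun q => p q.1 q.2) = 0 ∧
    RB.rank ≤ d * n - d - 1 := by
  set D : Matrix (Fin m × Fin d) (Fin m × Fin d) ℝ :=
    fun q r => if q.1 = r.1 then
      ((Real.sqrt (∑ i, e q.1 i ^ 2))⁻¹ • projMat (g q.1)) q.2 r.2 else 0 with hD
  -- projection kills e
  have projVec : ∀ x : Fin d → ℝ, x ≠ 0 →
      projMat ((Real.sqrt (∑ i, x i ^ 2))⁻¹ • x) *ᵥ x = 0 := by
    intro x hx
    funext a
    set s := Real.sqrt (∑ i, x i ^ 2) with hsdef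
    have hs2 : s ^ 2 = ∑ i, x i ^ 2 :=
      Real.sq_sqrt (Finset.sum_nonneg fun i _ => sq_nonneg _)
    have hsne : s ≠ 0 := by
      obtain ⟨i, hi⟩ := Function.ne_iff.mp hx
      have hi' : x i ≠ 0 := by simpa using hi
      have : 0 < ∑ i, x i ^ 2 :=
        Finset.sum_pos' (fun i _ => sq_nonneg _) ⟨i, Finset.mem_univ i, by positivity⟩
      exact ne_of_gt (Real.sqrt_pos.mpr this)
    simp only [projMat, Matrix.sub_mulVec, Matrix.one_mulVec, Pi.sub_apply, Pi.zero_apply]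
    have hvv : (Matrix.vecMulVec (s⁻¹ • x) (s⁻¹ • x) *ᵥ x) a
        = s⁻¹ * x a * (s⁻¹ * ∑ b, x b ^ 2) := by
      rw [Matrix.mulVec]
      simp only [dotProduct, Matrix.vecMulVec_apply, Pi.smul_apply, smul_eq_mul]
      rw [Finset.mul_sum, Finset.mul_sum]
      exact Finset.sum_congr rfl fun b _ => by ring
    rw [hvv, ← hs2]
    field_simp
    ring
  have hproj : ∀ k, projMat (g k) *ᵥ e k = 0 := by
    intro k
    rw [hg k]
    exact projVec (e k) (by rw [he k]; exact sub_ne_zero.mpr (hp k))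
  -- first claim
  have claim1 : ∀ v : Fin d → ℝ, RB *ᵥ (fun q => v q.2) = 0 := by
    intro v
    rw [hRB, ← Matrix.mulVec_mulVec]
    have : (H ⊗ₖ (1 : Matrix (Fin d) (Fin d) ℝ)) *ᵥ (fun q => v q.2) = 0 := by
      funext q
      obtain ⟨k, a⟩ := q
      rw [kronVec]
      simp only [hH]
      rw [sumH' (head k) (tail k) (hht k) (fun _ => v a)]
      simp
    rw [this, Matrix.mulVec_zero]
  have claim2 : RB *ᵥ (fun q => p q.1 q.2) = 0 := by
    rw [hRB, ← Matrix.mulVec_mulVec]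
    have h1 : (H ⊗ₖ (1 : Matrix (Fin d) (Fin d) ℝ)) *ᵥ (fun q => p q.1 q.2)
        = fun q => e q.1 q.2 := by
      funext q
      obtain ⟨k, a⟩ := q
      rw [kronVec]
      simp only [hH]
      rw [sumH' (head k) (tail k) (hht k) (fun j => p j a)]
      rw [he k]; simp
    rw [h1]
    funext q
    obtain ⟨k, a⟩ := q
    rw [Matrix.mulVec]
    simp only [dotProduct, Fintype.sum_prod_type, hD, Pi.zero_apply]
    rw [Finset.sum_eq_single k]
    · have : ∑ b, ((Real.sqrt (∑ i, e k i ^ 2))⁻¹ • projMat (g k)) a b * e k b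
          = (Real.sqrt (∑ i, e k i ^ 2))⁻¹ * (projMat (g k) *ᵥ e k) a := by
        rw [Matrix.mulVec]
        simp only [dotProduct, Matrix.smul_apply, smul_eq_mul, Finset.mul_sum]
        exact Finset.sum_congr rfl fun b _ => by ring
      simpa [this, hproj k]
    · intro r _ hr
      simp [Ne.symm hr]
    · simp
  refine ⟨claim1, claim2, ?_⟩
  -- rank bound
  rcases Nat.eq_zero_or_pos m with hm | hm
  · subst hm
    have h0 : RB.rank ≤ 0 := by simpa using RB.rank_le_card_height
    exact le_trans h0 (Nat.zero_le _)
  · -- kernel contains d+1 independent vectors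
    set K := LinearMap.ker RB.mulVecLin with hK
    set w : Fin (d+1) → (Fin n × Fin d → ℝ) :=
      Fin.snoc (fun i q => if q.2 = i then (1:ℝ) else 0) (fun q => p q.1 q.2) with hw
    have hker : ∀ i, w i ∈ K := by
      intro i
      refine Fin.lastCases ?_ ?_ i
      · rw [LinearMap.mem_ker, Matrix.mulVecLin_apply, hw, Fin.snoc_last]
        exact claim2
      · intro i
        rw [LinearMap.mem_ker, Matrix.mulVecLin_apply, hw, Fin.snoc_castSucc]
        exact claim1 (fun b => if b = i then 1 else 0)
    have hli : LinearIndependent ℝ w := by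
      rw [Fintype.linearIndependent_iff]
      intro c hc
      have key : ∀ j a, c (Fin.castSucc a) + c (Fin.last d) * p j a = 0 := by
        intro j a
        have := congrFun hc (j, a)
        simp only [Finset.sum_apply, Pi.smul_apply, smul_eq_mul, Pi.zero_apply] at this
        rw [Fin.sum_univ_castSucc] at this
        simp only [hw, Fin.snoc_castSucc, Fin.snoc_last] at this
        rwa [Finset.sum_eq_single a (fun b _ hb => by simp [Ne.symm hb])
          (by simp), if_pos rfl, mul_one] at this
      set k0 : Fin m := ⟨0, hm⟩
      obtain ⟨a0, ha0⟩ := Function.ne_iff.mp (hp k0)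
      have h1 := key (head k0) a0
      have h2 := key (tail k0) a0
      have hlast : c (Fin.last d) = 0 := by
        have : c (Fin.last d) * (p (head k0) a0 - p (tail k0) a0) = 0 := by ring_nf; linarith
        rcases mul_eq_zero.mp this with h | h
        · exact h
        · exact absurd (sub_eq_zero.mp h) ha0
      intro i
      refine Fin.lastCases hlast (fun a => ?_) i
      have := key (head k0) a
      rw [hlast] at this; linarith
    have hcard : d + 1 ≤ Module.finrank ℝ K := by
      have hli' : LinearIndependent ℝ (fun i => (⟨w i, hker i⟩ : K)) :=
        LinearIndependent.of_comp K.subtype hli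
      simpa using hli'.fintype_card_le_finrank
    have hrn := LinearMap.finrank_range_add_finrank_ker RB.mulVecLin
    rw [Module.finrank_pi, Fintype.card_prod, Fintype.card_fin, Fintype.card_fin] at hrn
    have hrank : RB.rank = Module.finrank ℝ (LinearMap.range RB.mulVecLin) := rfl
    rw [← hrank, ← hK] at hrn
    have hmul : n * d = d * n := Nat.mul_comm n d
    omega
end

section
/- For the leaderless bearing formation system ṗ = −L p with Null(L) = span{1⊗I_d, r*} and r* orthogonal to 1⊗I_d, the final formation scale s(∞) = ‖p(∞) − 1⊗c(∞)‖ equals |(r*)^T p(0)|/‖r*‖ and satisfies 0 ≤ s(∞) ≤ s(0), where s(0) = ‖p(0) − 1⊗c(0)‖. -/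
/-!
Since `p(t) → q` and `ṗ = -L p → -L q`, the limit satisfies `L q = 0`, so
`q = α r* + 1 ⊗ β` and the centred formation of `q` is `α r*`, of scale `|α| ‖r*‖`.
As `L` is symmetric, `(r*)ᵀ p` is conserved along the flow, which pins down
`α ‖r*‖² = (r*)ᵀ p(0)`. Because `r* ⊥ 1 ⊗ I_d`, also `(r*)ᵀ p(0) = (r*)ᵀ (p(0) - 1 ⊗ c(0))`,
and the bound `s(∞) ≤ s(0)` is Cauchy–Schwarz.
-/

open Matrix Filter

/-- The vector `1 ⊗ ê_a ∈ ℝ^{dn}`, indexed by (agent, coordinate). -/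
def onesVec {n d : ℕ} (a : Fin d) : Fin n × Fin d → ℝ :=
  fun q => if q.2 = a then 1 else 0

/-- Centroid `c(p) = (1/n) Σᵢ pᵢ`. -/
noncomputable def centroid {n d : ℕ} (p : Fin n × Fin d → ℝ) : Fin d → ℝ :=
  fun a => (n : ℝ)⁻¹ * ∑ i, p (i, a)

/-- Scale `s(p) = ‖p - 1 ⊗ c(p)‖` (Euclidean norm). -/
noncomputable def fscale {n d : ℕ} (p : Fin n × Fin d → ℝ) : ℝ :=
  Real.sqrt ((p - fun q => centroid p q.2) ⬝ᵥ (p - fun q => centroid p q.2))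

open Topology

theorem Real.eq_zero_of_tendsto_of_tendsto_deriv {f f' : ℝ → ℝ} {a c : ℝ}
    (hf : ∀ t, HasDerivAt f (f' t) t) (ha : Tendsto f atTop (𝓝 a))
    (hc : Tendsto f' atTop (𝓝 c)) : c = 0 := by
  have slope (t : ℝ) : ∃ x ∈ Set.Ioo t (t + 1), f' x = (f (t + 1) - f t) / ((t + 1) - t) :=
    exists_hasDerivAt_eq_slope f f' (by linarith)
      (fun x _ => (hf x).continuousAt.continuousWithinAt) (fun x _ => hf x)
  choose ξ hξ hf'ξ using slope
  have hξ_top : Tendsto ξ atTop atTop := tendsto_atTop_mono (fun t => (hξ t).1.le) tendsto_id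
  have h_increment : Tendsto (fun t => f (t + 1) - f t) atTop (𝓝 0) := by
    simpa using (ha.comp (tendsto_atTop_add_const_right atTop 1 tendsto_id)).sub ha
  refine tendsto_nhds_unique (hc.comp hξ_top) (h_increment.congr fun t => ?_)
  simp [Function.comp, hf'ξ]

theorem eq_zero_of_tendsto_of_tendsto_deriv {E : Type*} [NormedAddCommGroup E]
    [NormedSpace ℝ E] {f f' : ℝ → E} {a c : E} (hf : ∀ t, HasDerivAt f (f' t) t)
    (ha : Tendsto f atTop (𝓝 a)) (hc : Tendsto f' atTop (𝓝 c)) : c = 0 :=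
  SeparatingDual.eq_zero_of_forall_dual_eq_zero fun ℓ =>
    Real.eq_zero_of_tendsto_of_tendsto_deriv
      (fun t => ℓ.hasFDerivAt.comp_hasDerivAt t (hf t))
      ((ℓ.continuous.tendsto a).comp ha) ((ℓ.continuous.tendsto c).comp hc)

theorem Real.abs_dotProduct_le_sqrt_mul_sqrt {ι : Type*} [Fintype ι] (u v : ι → ℝ) :
    |u ⬝ᵥ v| ≤ √(u ⬝ᵥ u) * √(v ⬝ᵥ v) := by
  have hCS (w : ι → ℝ) : w ⬝ᵥ v ≤ √(w ⬝ᵥ w) * √(v ⬝ᵥ v) := by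
    simpa only [dotProduct, pow_two] using Real.sum_mul_le_sqrt_mul_sqrt Finset.univ w v
  refine abs_le.2 ⟨?_, hCS u⟩
  have := hCS (-u)
  rw [neg_dotProduct, neg_dotProduct_neg] at this
  linarith

section LinearFlow

variable {m : Type*} [Fintype m] {L : Matrix m m ℝ} {p : ℝ → m → ℝ} {q : m → ℝ}

theorem mulVec_eq_zero_of_tendsto (hp : ∀ t, HasDerivAt p (-(L *ᵥ p t)) t)
    (hq : Tendsto p atTop (𝓝 q)) : L *ᵥ q = 0 :=
  neg_eq_zero.1 <| eq_zero_of_tendsto_of_tendsto_deriv hp hq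
    ((continuous_const.matrix_mulVec continuous_id).tendsto q |>.comp hq).neg

theorem dotProduct_eq_of_vecMul_eq_zero (hp : ∀ t, HasDerivAt p (-(L *ᵥ p t)) t)
    {v : m → ℝ} (hv : v ᵥ* L = 0) (t : ℝ) : v ⬝ᵥ p t = v ⬝ᵥ p 0 := by
  have hderiv (s : ℝ) : HasDerivAt (fun s => v ⬝ᵥ p s) 0 s := by
    have h := HasDerivAt.fun_sum fun i (_ : i ∈ Finset.univ) =>
      (hasDerivAt_pi.1 (hp s) i).const_mul (v i)
    rwa [← dotProduct, dotProduct_neg, dotProduct_mulVec, hv, zero_dotProduct, neg_zero] at h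
  exact is_const_of_deriv_eq_zero (fun s => (hderiv s).differentiableAt)
    (fun s => (hderiv s).deriv) t 0

theorem dotProduct_eq_of_vecMul_eq_zero_of_tendsto (hp : ∀ t, HasDerivAt p (-(L *ᵥ p t)) t)
    {v : m → ℝ} (hv : v ᵥ* L = 0) (hq : Tendsto p atTop (𝓝 q)) : v ⬝ᵥ q = v ⬝ᵥ p 0 := by
  refine tendsto_nhds_unique ((continuous_const.dotProduct continuous_id).tendsto q |>.comp hq) ?_
  simp only [Function.comp_def, id, dotProduct_eq_of_vecMul_eq_zero hp hv, tendsto_const_nhds]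

end LinearFlow

section Formation

variable {n d : ℕ} {r : Fin n × Fin d → ℝ}

theorem onesVec_dotProduct (a : Fin d) (v : Fin n × Fin d → ℝ) :
    onesVec a ⬝ᵥ v = ∑ i, v (i, a) := by
  simp [onesVec, dotProduct, Fintype.sum_prod_type]

theorem dotProduct_comp_snd_eq_zero (hr : ∀ a, ∑ i, r (i, a) = 0) (β : Fin d → ℝ) :
    r ⬝ᵥ (fun x => β x.2) = 0 := by
  simp only [dotProduct, Fintype.sum_prod_type]
  rw [Finset.sum_comm]
  simp [← Finset.sum_mul, hr]

theorem exists_eq_smul_add_comp_snd_of_mem_span {z : Fin n × Fin d → ℝ}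
    (hz : z ∈ Submodule.span ℝ ({r} ∪ Set.range (onesVec (n := n) (d := d)))) :
    ∃ (α : ℝ) (β : Fin d → ℝ), z = α • r + fun x => β x.2 := by
  rw [Submodule.span_union, Submodule.mem_sup] at hz
  obtain ⟨_, hy, _, hw, rfl⟩ := hz
  obtain ⟨α, rfl⟩ := Submodule.mem_span_singleton.1 hy
  obtain ⟨β, rfl⟩ := (Submodule.mem_span_range_iff_exists_fun ℝ).1 hw
  refine ⟨α, β, ?_⟩
  funext x
  simp [onesVec]

theorem sub_centroid_smul_add_comp_snd (hr : ∀ a, ∑ i, r (i, a) = 0) (α : ℝ)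
    (β : Fin d → ℝ) :
    ((α • r + fun x => β x.2) - fun x => centroid (α • r + fun x => β x.2) x.2) = α • r := by
  funext ⟨i, a⟩
  have hn : (n : ℝ) ≠ 0 := Nat.cast_ne_zero.2 (Fin.pos i).ne'
  have hcentroid : centroid (α • r + fun x => β x.2) a = β a := by
    simp only [centroid, Pi.add_apply, Pi.smul_apply, smul_eq_mul, Finset.sum_add_distrib,
      ← Finset.mul_sum, hr, Finset.sum_const, Finset.card_univ, Fintype.card_fin, nsmul_eq_mul]
    field_simp
    ring
  simp [hcentroid]

theorem fscale_smul_add_comp_snd (hr : ∀ a, ∑ i, r (i, a) = 0) (α : ℝ) (β : Fin d → ℝ) :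
    fscale (α • r + fun x => β x.2) = |α| * √(r ⬝ᵥ r) := by
  rw [fscale, sub_centroid_smul_add_comp_snd hr, smul_dotProduct, dotProduct_smul, smul_eq_mul,
    smul_eq_mul, ← mul_assoc, ← pow_two, Real.sqrt_mul (sq_nonneg α), Real.sqrt_sq_eq_abs]

theorem abs_dotProduct_le_sqrt_mul_fscale (hr : ∀ a, ∑ i, r (i, a) = 0)
    (v : Fin n × Fin d → ℝ) : |r ⬝ᵥ v| ≤ √(r ⬝ᵥ r) * fscale v := by
  have hcentred : r ⬝ᵥ v = r ⬝ᵥ (v - fun x => centroid v x.2) := by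
    rw [dotProduct_sub, dotProduct_comp_snd_eq_zero hr, sub_zero]
  rw [hcentred, fscale]
  exact Real.abs_dotProduct_le_sqrt_mul_sqrt _ _

end Formation

theorem stmt15_general {n d : ℕ}
    (L : Matrix (Fin n × Fin d) (Fin n × Fin d) ℝ) (hL : L.PosSemidef)
    (rstar : Fin n × Fin d → ℝ)
    (horth : ∀ a : Fin d, (onesVec (n := n) a) ⬝ᵥ rstar = 0)
    (hnull : ∀ z, L *ᵥ z = 0 ↔
      z ∈ Submodule.span ℝ ({rstar} ∪ Set.range (onesVec (n := n) (d := d))))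
    (p : ℝ → Fin n × Fin d → ℝ)
    (hp : ∀ t, HasDerivAt p (-(L *ᵥ p t)) t)
    (q : Fin n × Fin d → ℝ) (hq : Tendsto p atTop (nhds q)) :
    fscale q = |rstar ⬝ᵥ p 0| / Real.sqrt (rstar ⬝ᵥ rstar) ∧
    0 ≤ fscale q ∧ fscale q ≤ fscale (p 0) := by
  have hcol (a : Fin d) : ∑ i, rstar (i, a) = 0 :=
    (onesVec_dotProduct a rstar).symm.trans (horth a)
  have hrL : rstar ᵥ* L = 0 := by
    rw [← mulVec_transpose, ← conjTranspose_eq_transpose_of_trivial, hL.1.eq]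
    exact (hnull rstar).2 (Submodule.subset_span (Or.inl rfl))
  obtain ⟨α, β, rfl⟩ :=
    exists_eq_smul_add_comp_snd_of_mem_span ((hnull q).1 (mulVec_eq_zero_of_tendsto hp hq))
  have hconserved : rstar ⬝ᵥ p 0 = α * (rstar ⬝ᵥ rstar) := by
    rw [← dotProduct_eq_of_vecMul_eq_zero_of_tendsto hp hrL hq, dotProduct_add, dotProduct_smul,
      dotProduct_comp_snd_eq_zero hcol, add_zero, smul_eq_mul]
  have hscale : fscale (α • rstar + fun x => β x.2) = |rstar ⬝ᵥ p 0| / √(rstar ⬝ᵥ rstar) := by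
    rw [fscale_smul_add_comp_snd hcol, hconserved, abs_mul,
      abs_of_nonneg (a := rstar ⬝ᵥ rstar) (dotProduct_star_self_nonneg rstar), mul_div_assoc,
      Real.div_sqrt]
  refine ⟨hscale, Real.sqrt_nonneg _, hscale ▸ div_le_of_le_mul₀ (Real.sqrt_nonneg _)
    (Real.sqrt_nonneg _) ?_⟩
  exact (abs_dotProduct_le_sqrt_mul_fscale hcol _).trans_eq (mul_comm _ _)

/-- For the leaderless bearing formation system `ṗ = -L p` with
`Null(L) = span{1⊗I_d, r*}`, `r* ⊥ 1⊗I_d`, the final scale satisfies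
`s(∞) = |(r*)ᵀ p(0)| / ‖r*‖` and `0 ≤ s(∞) ≤ s(0)`. -/
theorem stmt15 {n d : ℕ} (hn : 2 ≤ n) (hd : 2 ≤ d)
    (L : Matrix (Fin n × Fin d) (Fin n × Fin d) ℝ) (hL : L.PosSemidef)
    (rstar : Fin n × Fin d → ℝ) (hr0 : rstar ≠ 0)
    (horth : ∀ a : Fin d, (onesVec (n := n) a) ⬝ᵥ rstar = 0)
    (hnull : ∀ z, L *ᵥ z = 0 ↔
      z ∈ Submodule.span ℝ ({rstar} ∪ Set.range (onesVec (n := n) (d := d))))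
    (p : ℝ → Fin n × Fin d → ℝ)
    (hp : ∀ t, HasDerivAt p (-(L *ᵥ p t)) t)
    (q : Fin n × Fin d → ℝ) (hq : Tendsto p atTop (nhds q)) :
    fscale q = |rstar ⬝ᵥ p 0| / Real.sqrt (rstar ⬝ᵥ rstar) ∧
    0 ≤ fscale q ∧ fscale q ≤ fscale (p 0) :=
  stmt15_general L hL rstar horth hnull p hp q hq
end

section
/- If a symmetric positive semi-definite matrix L ∈ R^{dn×dn} has null space exactly span{1⊗I_d, p} with the points p_1,...,p_n ∈ R^d not all equal pairwise (specifically p_i ≠ p_j for i ≠ j among the first k indices), and k ≥ 2, then the trailing diagonal block L_ff (corresponding to indices k+1,...,n) is positive definite. -/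
/-!
For `x ≠ 0` on the followers, let `z` be its extension by zero to all agents. Then
`xᵀ L_ff x = zᵀ L z ≥ 0`, and equality would force `L z = 0`, i.e. `z = c p + 1 ⊗ b`.
But `z` vanishes at the two leaders `0` and `1`, so `c (p₀ - p₁) = 0`; since `p₀ ≠ p₁`
this gives `c = 0`, then `b = 0`, hence `z = 0`, a contradiction.
-/

open Matrix

open Function

namespace Matrix

section ExtendByZero

variable {R m n : Type*} [Fintype m] [Fintype n] {e : m → n}

lemma extend_zero_dotProduct [NonUnitalNonAssocSemiring R] (he : Injective e) (x : m → R)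
    (w : n → R) : extend e x 0 ⬝ᵥ w = x ⬝ᵥ (w ∘ e) :=
  (Fintype.sum_of_injective e he _ _ (fun b hb => by simp [extend_apply' _ _ _ hb])
    (fun a => by simp [he.extend_apply])).symm

lemma dotProduct_extend_zero [NonUnitalNonAssocSemiring R] (he : Injective e) (w : n → R)
    (x : m → R) : w ⬝ᵥ extend e x 0 = (w ∘ e) ⬝ᵥ x :=
  (Fintype.sum_of_injective e he _ _ (fun b hb => by simp [extend_apply' _ _ _ hb])
    (fun a => by simp [he.extend_apply])).symm

lemma submatrix_mulVec_eq_mulVec_extend_zero [NonUnitalNonAssocSemiring R] {f : m → n}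
    (he : Injective e) (L : Matrix n n R) (x : m → R) :
    L.submatrix f e *ᵥ x = (L *ᵥ extend e x 0) ∘ f := by
  ext i
  exact (dotProduct_extend_zero he _ x).symm

omit [Fintype n] in
lemma star_extend_zero [AddMonoid R] [StarAddMonoid R] (he : Injective e) (x : m → R) :
    star (extend e x 0) = extend e (star x) 0 := by
  ext b
  by_cases hb : ∃ a, e a = b
  · obtain ⟨a, rfl⟩ := hb
    simp [he.extend_apply]
  · simp [extend_apply' _ _ _ hb]

lemma star_dotProduct_submatrix_mulVec [CommSemiring R] [StarRing R] (he : Injective e)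
    (L : Matrix n n R) (x : m → R) :
    star x ⬝ᵥ L.submatrix e e *ᵥ x = star (extend e x 0) ⬝ᵥ L *ᵥ extend e x 0 := by
  rw [star_extend_zero he, extend_zero_dotProduct he,
    submatrix_mulVec_eq_mulVec_extend_zero he]

end ExtendByZero

open scoped ComplexOrder in
lemma PosSemidef.posDef_submatrix_of_ker {𝕜 m n : Type*} [RCLike 𝕜] [Fintype m] [Fintype n]
    {L : Matrix n n 𝕜} (hL : L.PosSemidef) {e : m → n} (he : Injective e)
    (hker : ∀ z, L *ᵥ z = 0 → (∀ i ∉ Set.range e, z i = 0) → z = 0) :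
    (L.submatrix e e).PosDef := by
  refine posDef_iff_dotProduct_mulVec.mpr ⟨hL.isHermitian.submatrix e, fun x hx => ?_⟩
  rw [star_dotProduct_submatrix_mulVec he]
  refine (hL.dotProduct_mulVec_nonneg _).lt_of_ne fun h => hx ?_
  have hz : extend e x 0 = 0 :=
    hker _ ((hL.dotProduct_mulVec_zero_iff _).mp h.symm)
      fun b hb => extend_apply' _ _ _ (by simpa using hb)
  ext a
  simpa [he.extend_apply] using congrFun hz (e a)

end Matrix

lemma apply_eq_of_mem_span_onesVec {n d : ℕ} {w : Fin n × Fin d → ℝ}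
    (hw : w ∈ Submodule.span ℝ (Set.range (onesVec (n := n) (d := d)))) (i j : Fin n)
    (a : Fin d) : w (i, a) = w (j, a) := by
  induction hw using Submodule.span_induction with
  | mem v hv =>
    obtain ⟨b, rfl⟩ := hv
    simp [onesVec]
  | zero => rfl
  | add u v _ _ hu hv => simp [hu, hv]
  | smul c v _ hv => simp [hv]

lemma eq_zero_of_mem_span_of_eq_zero_at {n d : ℕ} {p : Fin n → Fin d → ℝ}
    {z : Fin n × Fin d → ℝ}
    (hz : z ∈ Submodule.span ℝ ({fun q => p q.1 q.2} ∪ Set.range (onesVec (n := n) (d := d))))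
    {i j : Fin n} (hp : p i ≠ p j) (hi : ∀ a, z (i, a) = 0) (hj : ∀ a, z (j, a) = 0) :
    z = 0 := by
  rw [Submodule.span_union, Submodule.mem_sup] at hz
  obtain ⟨_, hc, b, hb, rfl⟩ := hz
  obtain ⟨c, rfl⟩ := Submodule.mem_span_singleton.mp hc
  have hb_const := apply_eq_of_mem_span_onesVec hb
  simp only [Pi.add_apply, Pi.smul_apply, smul_eq_mul] at hi hj
  have hc0 : c = 0 := by
    obtain ⟨a, ha⟩ := Function.ne_iff.mp hp
    have : c * (p i a - p j a) = 0 := by linarith [hi a, hj a, hb_const i j a]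
    exact (mul_eq_zero.mp this).resolve_right (sub_ne_zero.mpr ha)
  ext ⟨l, a⟩
  simp [hc0, hb_const l i a, by simpa [hc0] using hi a]

theorem stmt17_general {n d k : ℕ} (hk : 2 ≤ k) (hkn : k ≤ n)
    (p : Fin n → Fin d → ℝ) (hdist : ∀ i j : Fin n, i ≠ j → p i ≠ p j)
    (L : Matrix (Fin n × Fin d) (Fin n × Fin d) ℝ) (hL : L.PosSemidef)
    (hnull : ∀ z, L *ᵥ z = 0 ↔
      z ∈ Submodule.span ℝ
        ({fun q => p q.1 q.2} ∪ Set.range (onesVec (n := n) (d := d)))) :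
    (L.submatrix
        (fun q : {i : Fin n // k ≤ (i : ℕ)} × Fin d => ((q.1 : Fin n), q.2))
        (fun q : {i : Fin n // k ≤ (i : ℕ)} × Fin d => ((q.1 : Fin n), q.2))).PosDef := by
  refine hL.posDef_submatrix_of_ker (Subtype.val_injective.prodMap injective_id)
    fun z hLz hlead => ?_
  have leader (i : Fin n) (hi : (i : ℕ) < k) (a : Fin d) : z (i, a) = 0 :=
    hlead _ <| by rintro ⟨⟨⟨l, hl⟩, b⟩, h⟩; obtain ⟨rfl, -⟩ := Prod.mk.inj h; exact hi.not_ge hl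
  exact eq_zero_of_mem_span_of_eq_zero_at ((hnull z).mp hLz)
    (hdist ⟨0, by omega⟩ ⟨1, by omega⟩ (by simp [Fin.ext_iff]))
    (leader _ (by simp; omega)) (leader _ (by simp; omega))

/-- If a symmetric PSD matrix `L ∈ ℝ^{dn×dn}` has null space exactly
`span{1⊗I_d, p}` with the points `p_i` pairwise distinct, and the number of
leaders `k ≥ 2`, then the follower diagonal block `L_ff` (agents `k+1, …, n`)
is positive definite. -/
theorem stmt17 {n d k : ℕ} (hd : 2 ≤ d) (hn : 2 ≤ n) (hk : 2 ≤ k) (hkn : k ≤ n)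
    (p : Fin n → Fin d → ℝ) (hdist : ∀ i j : Fin n, i ≠ j → p i ≠ p j)
    (L : Matrix (Fin n × Fin d) (Fin n × Fin d) ℝ) (hL : L.PosSemidef)
    (hnull : ∀ z, L *ᵥ z = 0 ↔
      z ∈ Submodule.span ℝ
        ({fun q => p q.1 q.2} ∪ Set.range (onesVec (n := n) (d := d)))) :
    (L.submatrix
        (fun q : {i : Fin n // k ≤ (i : ℕ)} × Fin d => ((q.1 : Fin n), q.2))
        (fun q : {i : Fin n // k ≤ (i : ℕ)} × Fin d => ((q.1 : Fin n), q.2))).PosDef :=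
  stmt17_general hk hkn p hdist L hL hnull
end
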